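/- arXiv:1406.1721 — 10 statements merged into one kernel-verified Lean document; each statement's English description precedes it below -/
import Mathlib

section
/- Let K be a field of characteristic ≠ 2, n ≥ 1, and t : Fin n → K with t i ≠ 0 for all i and (t i)^2 ≠ (t j)^2 for all i ≠ j. Let μ : Fin n → ℕ be antitone and set λ j = 2·μ j + (n − j) for j ∈ Fin n (i.e. λ = 2μ + ρ(n)). Then the sum over all sign vectors ε of det(M_ε) / ( (∏ i, 2·ε i·t i) · ∏_{i<j} (ε i·t i + ε j·t j)·(ε j·t j − ε i·t i) ), where M_ε is the n×n matrix with entries (M_ε) i j = (ε i · t i)^(λ j + (n − 1 − j)), equals det(N) / ∏_{i<j} ((t j)^2 − (t i)^2), where N is the n×n matrix with entries N i j = ((t i)^2)^(μ j + (n − 1 − j)). (This is the Atiyah–Bott fixed-point evaluation of the Pragacz–Ratajski theorem: the equivariant push-forward of the Schur class s_λ(Q) over the Lagrangian Grassmannian LG(n) equals s_μ(t_1^2,…,t_n^2).) -/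
/-!
Each fixed point of the torus action on `LG(n)` contributes the same amount. With
`g i = ε i * t i`, the exponents `λ j + n - 1 - j = 2 (μ j + n - 1 - j) + 1` are odd, so pulling
one factor `g i` out of each row of the numerator leaves the determinant in the squares
`g i ^ 2 = t i ^ 2`, and that factor `∏ g i` cancels against the tangent weights `2 g i`, while
`(g i + g j) (g j - g i) = t j ^ 2 - t i ^ 2`. Hence every one of the `2 ^ n` terms equals
`s_μ(t²) / 2 ^ n`.
-/

open Finset

/-- The sign vector `ε : Fin n → K` associated to a boolean vector `s`:
`ε i = 1` if `s i = true` and `ε i = -1` otherwise.  Every sign vector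
(function with values in `{1, -1}`) arises this way exactly once. -/
def sgnv {K : Type*} [Ring K] {n : ℕ} (s : Fin n → Bool) : Fin n → K :=
  fun i => if s i then 1 else -1

theorem sgnv_sq {K : Type*} [Ring K] {n : ℕ} (s : Fin n → Bool) (i : Fin n) :
    sgnv (K := K) s i ^ 2 = 1 := by
  unfold sgnv
  split <;> simp

theorem sgnv_mul_sq {K : Type*} [CommRing K] {n : ℕ} (s : Fin n → Bool) (t : Fin n → K)
    (i : Fin n) : (sgnv s i * t i) ^ 2 = t i ^ 2 := by
  rw [mul_pow, sgnv_sq, one_mul]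

theorem det_of_pow_odd {R : Type*} [CommRing R] {n : ℕ} (x : Fin n → R) (e : Fin n → ℕ) :
    (Matrix.of fun i j => x i ^ (2 * e j + 1)).det
      = (∏ i, x i) * (Matrix.of fun i j => (x i ^ 2) ^ e j).det := by
  rw [← Matrix.det_mul_column]
  congr 1
  ext i j
  simp only [Matrix.of_apply]
  ring

theorem fixedPoint_term_eq {K : Type*} [Field K] {n : ℕ} (e : Fin n → ℕ) (t g : Fin n → K)
    (ht : ∀ i, t i ≠ 0) (hg : ∀ i, g i ^ 2 = t i ^ 2) :
    (Matrix.of fun i j => g i ^ (2 * e j + 1)).det /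
        ((∏ i, 2 * g i) * ∏ i, ∏ j ∈ Ioi i, (g i + g j) * (g j - g i))
      = (Matrix.of fun i j => (t i ^ 2) ^ e j).det /
          (2 ^ n * ∏ i, ∏ j ∈ Ioi i, (t j ^ 2 - t i ^ 2)) := by
  have hg0 : (∏ i, g i) ≠ 0 :=
    prod_ne_zero_iff.mpr fun i _ hgi =>
      ht i <| (pow_eq_zero_iff two_ne_zero).mp <| by rw [← hg i, hgi, zero_pow two_ne_zero]
  have hpairs : ∀ i j, (g i + g j) * (g j - g i) = t j ^ 2 - t i ^ 2 := fun i j => by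
    linear_combination hg j - hg i
  simp only [det_of_pow_odd, hg, prod_mul_distrib, prod_const, card_univ, Fintype.card_fin,
    hpairs]
  rw [mul_right_comm, mul_comm _ (∏ i, g i), mul_div_mul_left _ _ hg0]

theorem pushforward_schur_LG_general (K : Type*) [Field K] (hK : (2 : K) ≠ 0)
    (n : ℕ)
    (t : Fin n → K) (ht : ∀ i, t i ≠ 0)
    (μ : Fin n → ℕ)
    (lam : Fin n → ℕ) (hlam : ∀ j : Fin n, lam j = 2 * μ j + (n - (j : ℕ))) :
    ∑ s : Fin n → Bool,
      (Matrix.of fun i j : Fin n =>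
          (sgnv (K := K) s i * t i) ^ (lam j + (n - 1 - (j : ℕ)))).det /
        ((∏ i, 2 * sgnv (K := K) s i * t i) *
          ∏ i, ∏ j ∈ Ioi i,
            (sgnv (K := K) s i * t i + sgnv (K := K) s j * t j) *
              (sgnv (K := K) s j * t j - sgnv (K := K) s i * t i))
      = (Matrix.of fun i j : Fin n => ((t i) ^ 2) ^ (μ j + (n - 1 - (j : ℕ)))).det /
          ∏ i, ∏ j ∈ Ioi i, ((t j) ^ 2 - (t i) ^ 2) := by
  have hexp : ∀ j : Fin n, lam j + (n - 1 - (j : ℕ)) = 2 * (μ j + (n - 1 - (j : ℕ))) + 1 :=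
    fun j => by have := j.isLt; rw [hlam]; omega
  simp only [hexp, mul_assoc (2 : K)]
  rw [sum_congr rfl fun s _ => fixedPoint_term_eq _ t _ ht (sgnv_mul_sq s t), sum_const,
    card_univ, Fintype.card_fun, Fintype.card_bool, Fintype.card_fin, nsmul_eq_mul,
    Nat.cast_pow, Nat.cast_ofNat, mul_div_assoc', mul_div_mul_left _ _ (pow_ne_zero n hK)]

/-- Atiyah–Bott fixed-point evaluation of the Pragacz–Ratajski theorem for `LG(n)`:
for `λ = 2μ + ρ(n)`, the fixed-point sum for `s_λ(Q)` equals
`s_μ(t₁², …, t_n²) = det((t_i²)^(μ_j + n − 1 − j)) / ∏_{i<j} (t_j² − t_i²)`. -/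
theorem pushforward_schur_LG (K : Type*) [Field K] (hK : (2 : K) ≠ 0)
    (n : ℕ) (hn : 1 ≤ n)
    (t : Fin n → K) (ht : ∀ i, t i ≠ 0)
    (ht2 : ∀ i j : Fin n, i ≠ j → (t i) ^ 2 ≠ (t j) ^ 2)
    (μ : Fin n → ℕ) (hμ : Antitone μ)
    (lam : Fin n → ℕ) (hlam : ∀ j : Fin n, lam j = 2 * μ j + (n - (j : ℕ))) :
    ∑ s : Fin n → Bool,
      (Matrix.of fun i j : Fin n =>
          (sgnv (K := K) s i * t i) ^ (lam j + (n - 1 - (j : ℕ)))).det /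
        ((∏ i, 2 * sgnv (K := K) s i * t i) *
          ∏ i, ∏ j ∈ Ioi i,
            (sgnv (K := K) s i * t i + sgnv (K := K) s j * t j) *
              (sgnv (K := K) s j * t j - sgnv (K := K) s i * t i))
      = (Matrix.of fun i j : Fin n => ((t i) ^ 2) ^ (μ j + (n - 1 - (j : ℕ)))).det /
          ∏ i, ∏ j ∈ Ioi i, ((t j) ^ 2 - (t i) ^ 2) :=
  pushforward_schur_LG_general K hK n t ht μ lam hlam
end

section
/- Let K be a field of characteristic ≠ 2, n ≥ 1, and t : Fin n → K with t i ≠ 0 for all i and (t i)^2 ≠ (t j)^2 for all i ≠ j. Let λ : Fin n → ℕ be antitone and suppose there exists j ∈ Fin n such that λ j + (n − 1 − j) is even (equivalently, λ is not of the form 2μ + ρ(n) for a partition μ). Then the sum over all sign vectors ε of det(M_ε) / ( (∏ i, 2·ε i·t i) · ∏_{i<j} (ε i·t i + ε j·t j)·(ε j·t j − ε i·t i) ), where (M_ε) i j = (ε i · t i)^(λ j + (n − 1 − j)), equals 0. (Vanishing part of the Pragacz–Ratajski theorem for LG(n).) -/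
/-!
Write `ε` for the sign vector of `s`. Since `ε i ^ 2 = 1`, the denominator of the `s`-th term is
`(∏ i, ε i) * D` with `D = ∏ i, 2 t i * ∏_{i<j} (t j ^ 2 - t i ^ 2)` independent of `s`, and
`(∏ i, ε i)⁻¹ = ∏ i, ε i`. Multiplying the determinant by `∏ i, ε i` scales row `i` by `ε i`,
so by multilinearity in the rows the sum over all `s` is the single determinant whose `(i, j)` entry
is `t i ^ e j - (-t i) ^ e j`. A column with even exponent `e j` vanishes, hence so does the sum.
-/

open Finset

open Matrix

section Signs

variable {R : Type*} [CommRing R] {n : ℕ}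

theorem sgnv_mul_self (s : Fin n → Bool) (i : Fin n) : sgnv (K := R) s i * sgnv s i = 1 := by
  unfold sgnv
  split_ifs <;> simp

theorem prod_sgnv_mul_self (s : Fin n → Bool) :
    (∏ i, sgnv (K := R) s i) * ∏ i, sgnv (K := R) s i = 1 := by
  rw [← prod_mul_distrib]
  exact prod_eq_one fun i _ => sgnv_mul_self s i

theorem prod_two_mul_mul_prod_add_mul_sub_eq_of_mul_self_eq_one {ε : Fin n → R}
    (hε : ∀ i, ε i * ε i = 1) (t : Fin n → R) :
    (∏ i, 2 * ε i * t i) * ∏ i, ∏ j ∈ Ioi i, (ε i * t i + ε j * t j) * (ε j * t j - ε i * t i) =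
      (∏ i, ε i) * ((∏ i, 2 * t i) * ∏ i, ∏ j ∈ Ioi i, (t j ^ 2 - t i ^ 2)) := by
  have hlin : ∏ i, 2 * ε i * t i = (∏ i, ε i) * ∏ i, 2 * t i := by
    rw [← prod_mul_distrib]
    exact prod_congr rfl fun i _ => by ring
  have hquad : ∀ i j, (ε i * t i + ε j * t j) * (ε j * t j - ε i * t i) = t j ^ 2 - t i ^ 2 :=
    fun i j => by linear_combination t j ^ 2 * hε j - t i ^ 2 * hε i
  simp only [hlin, hquad]
  ring

theorem sum_prod_sgnv_mul_det (f : Fin n → R → R) (t : Fin n → R) :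
    ∑ s : Fin n → Bool, (∏ i, sgnv (K := R) s i) * (of fun i j => f j (sgnv s i * t i)).det =
      (of fun i j => f j (t i) - f j (-t i)).det := by
  classical
  let row : Fin n → Bool → Fin n → R := fun i b j =>
    (if b then 1 else -1) * f j ((if b then 1 else -1) * t i)
  have hrow : (fun i => ∑ b, row i b) = fun i j => f j (t i) - f j (-t i) := by
    funext i j
    simp [row, sub_eq_add_neg]
  calc ∑ s : Fin n → Bool, (∏ i, sgnv (K := R) s i) * (of fun i j => f j (sgnv s i * t i)).det
      = ∑ s : Fin n → Bool, detRowAlternating (fun i => row i (s i)) :=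
        sum_congr rfl fun s _ => (det_mul_column _ _).symm
    _ = detRowAlternating (fun i => ∑ b, row i b) :=
        (MultilinearMap.map_sum detRowAlternating.toMultilinearMap row).symm
    _ = (of fun i j => f j (t i) - f j (-t i)).det := by rw [hrow]; rfl

end Signs

theorem pushforward_schur_LG_vanishing_general (K : Type*) [Field K]
    (n : ℕ)
    (t : Fin n → K)
    (lam : Fin n → ℕ)
    (hpar : ∃ j : Fin n, Even (lam j + (n - 1 - (j : ℕ)))) :
    ∑ s : Fin n → Bool,
      (Matrix.of fun i j : Fin n =>
          (sgnv (K := K) s i * t i) ^ (lam j + (n - 1 - (j : ℕ)))).det /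
        ((∏ i, 2 * sgnv (K := K) s i * t i) *
          ∏ i, ∏ j ∈ Ioi i,
            (sgnv (K := K) s i * t i + sgnv (K := K) s j * t j) *
              (sgnv (K := K) s j * t j - sgnv (K := K) s i * t i))
      = 0 := by
  set e : Fin n → ℕ := fun j => lam j + (n - 1 - (j : ℕ))
  obtain ⟨j₀, hj₀⟩ : ∃ j, Even (e j) := hpar
  have hinv (s : Fin n → Bool) : (∏ i, sgnv (K := K) s i)⁻¹ = ∏ i, sgnv s i :=
    inv_eq_of_mul_eq_one_right (prod_sgnv_mul_self s)
  simp only [prod_two_mul_mul_prod_add_mul_sub_eq_of_mul_self_eq_one (sgnv_mul_self _),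
    div_mul_eq_div_div, div_eq_mul_inv _ (∏ i, _), hinv, mul_comm (det _)]
  rw [← sum_mul, ← sum_mul, sum_prod_sgnv_mul_det (fun j x => x ^ e j) t,
    det_eq_zero_of_column_eq_zero j₀ fun i => by simp [hj₀.neg_pow], zero_mul, zero_mul]

/-- Vanishing part of the Pragacz–Ratajski theorem for `LG(n)`:
if some `λ j + (n − 1 − j)` is even (i.e. `λ` is not of the form `2μ + ρ(n)`),
then the fixed-point sum for `s_λ(Q)` vanishes. -/
theorem pushforward_schur_LG_vanishing (K : Type*) [Field K] (hK : (2 : K) ≠ 0)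
    (n : ℕ) (hn : 1 ≤ n)
    (t : Fin n → K) (ht : ∀ i, t i ≠ 0)
    (ht2 : ∀ i j : Fin n, i ≠ j → (t i) ^ 2 ≠ (t j) ^ 2)
    (lam : Fin n → ℕ) (hlam : Antitone lam)
    (hpar : ∃ j : Fin n, Even (lam j + (n - 1 - (j : ℕ)))) :
    ∑ s : Fin n → Bool,
      (Matrix.of fun i j : Fin n =>
          (sgnv (K := K) s i * t i) ^ (lam j + (n - 1 - (j : ℕ)))).det /
        ((∏ i, 2 * sgnv (K := K) s i * t i) *
          ∏ i, ∏ j ∈ Ioi i,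
            (sgnv (K := K) s i * t i + sgnv (K := K) s j * t j) *
              (sgnv (K := K) s j * t j - sgnv (K := K) s i * t i))
      = 0 :=
  pushforward_schur_LG_vanishing_general K n t lam hpar
end

section
/- Let K be a field of characteristic ≠ 2, n ≥ 1, and t : Fin n → K with t i ≠ 0 for all i and (t i)^2 ≠ (t j)^2 for all i ≠ j. Let μ : Fin n → ℕ be antitone, set λ j = 2·μ j + (n − j), and suppose S is a multivariate polynomial in MvPolynomial (Fin n) K satisfying S · ∏_{i<j} (X j − X i) = det( (i,j) ↦ (X i)^(μ j + (n − 1 − j)) ) (so S is the Schur polynomial s_μ in the Jacobi bialternant sense). Then the sum over all sign vectors ε of det(M_ε) / ( (∏ i, 2·ε i·t i) · ∏_{i<j} (ε i·t i + ε j·t j)·(ε j·t j − ε i·t i) ), where (M_ε) i j = (ε i · t i)^(λ j + (n − 1 − j)), equals the evaluation of S at the point (t 0)^2, (t 1)^2, …, (t (n−1))^2. (Pragacz–Ratajski: ω_* s_λ(Q) = s_μ^{[2]}, i.e. s_μ(t_1^2,…,t_n^2), for LG(n).) -/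
/-!
Write `λ j + n − 1 − j = 2 e j + 1` with `e j = μ j + n − 1 − j`. For every sign vector the point
`x = ε t` has `x i ^ 2 = t i ^ 2`, so the numerator `det (x i ^ (2 e j + 1))` factors as
`(∏ x i) · det ((t i ^ 2) ^ e j)` and the denominator as `2 ^ n (∏ x i) ∏_{i<j} (t j ^ 2 − t i ^ 2)`.
Hence all `2 ^ n` summands equal `det ((t i ^ 2) ^ e j) / (2 ^ n V(t²))`, and the sum is the
bialternant quotient `s_μ(t²)`.
-/

open Finset

theorem sgnv_ne_zero {K : Type*} [Ring K] [Nontrivial K] {n : ℕ} (s : Fin n → Bool) (i : Fin n) :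
    sgnv (K := K) s i ≠ 0 := by
  unfold sgnv
  split_ifs <;> simp

theorem Matrix.det_of_pow_two_mul_add_one {R ι : Type*} [CommRing R] [Fintype ι] [DecidableEq ι]
    (x : ι → R) (e : ι → ℕ) :
    (Matrix.of fun i j => x i ^ (2 * e j + 1)).det
      = (∏ i, x i) * (Matrix.of fun i j => (x i ^ 2) ^ e j).det := by
  rw [← Matrix.det_mul_column]
  congr 1
  ext i j
  simp only [Matrix.of_apply]
  ring

theorem MvPolynomial.eval_eq_det_div_prod_sub {K : Type*} [Field K] {n : ℕ}
    (S : MvPolynomial (Fin n) K) (e : Fin n → ℕ)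
    (hS : S * ∏ i, ∏ j ∈ Ioi i, (X j - X i) = (Matrix.of fun i j : Fin n => (X i) ^ e j).det)
    {y : Fin n → K} (hy : Function.Injective y) :
    eval y S = (Matrix.of fun i j => y i ^ e j).det / ∏ i, ∏ j ∈ Ioi i, (y j - y i) := by
  have hV : ∏ i, ∏ j ∈ Ioi i, (y j - y i) ≠ 0 := by
    rw [← Matrix.det_vandermonde]
    exact Matrix.det_vandermonde_ne_zero_iff.mpr hy
  rw [eq_div_iff hV]
  simpa [map_prod, RingHom.map_det, Matrix.map] using congrArg (eval y) hS

theorem det_pow_odd_div_eq {K : Type*} [Field K] {n : ℕ} (x : Fin n → K) (hx : ∀ i, x i ≠ 0)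
    (e : Fin n → ℕ) :
    (Matrix.of fun i j => x i ^ (2 * e j + 1)).det /
        ((∏ i, 2 * x i) * ∏ i, ∏ j ∈ Ioi i, (x i + x j) * (x j - x i))
      = (Matrix.of fun i j => (x i ^ 2) ^ e j).det /
        (2 ^ n * ∏ i, ∏ j ∈ Ioi i, (x j ^ 2 - x i ^ 2)) := by
  have hdiff : ∀ i j, (x i + x j) * (x j - x i) = x j ^ 2 - x i ^ 2 := fun i j => by ring
  have hprod : ∏ i, x i ≠ 0 := prod_ne_zero_iff.mpr fun i _ => hx i
  simp only [Matrix.det_of_pow_two_mul_add_one, prod_mul_distrib, prod_const, card_univ,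
    Fintype.card_fin, hdiff]
  rw [mul_comm (2 ^ n : K), mul_assoc, mul_div_mul_left _ _ hprod]

theorem pushforward_schur_LG_eval_general (K : Type*) [Field K] (hK : (2 : K) ≠ 0)
    (n : ℕ)
    (t : Fin n → K) (ht : ∀ i, t i ≠ 0)
    (ht2 : ∀ i j : Fin n, i ≠ j → (t i) ^ 2 ≠ (t j) ^ 2)
    (μ : Fin n → ℕ)
    (lam : Fin n → ℕ) (hlam : ∀ j : Fin n, lam j = 2 * μ j + (n - (j : ℕ)))
    (S : MvPolynomial (Fin n) K)
    (hS : S * ∏ i, ∏ j ∈ Ioi i, (MvPolynomial.X j - MvPolynomial.X i)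
        = (Matrix.of fun i j : Fin n =>
            (MvPolynomial.X i : MvPolynomial (Fin n) K) ^ (μ j + (n - 1 - (j : ℕ)))).det) :
    ∑ s : Fin n → Bool,
      (Matrix.of fun i j : Fin n =>
          (sgnv (K := K) s i * t i) ^ (lam j + (n - 1 - (j : ℕ)))).det /
        ((∏ i, 2 * sgnv (K := K) s i * t i) *
          ∏ i, ∏ j ∈ Ioi i,
            (sgnv (K := K) s i * t i + sgnv (K := K) s j * t j) *
              (sgnv (K := K) s j * t j - sgnv (K := K) s i * t i))
      = MvPolynomial.eval (fun i => (t i) ^ 2) S := by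
  set e : Fin n → ℕ := fun j => μ j + (n - 1 - (j : ℕ))
  have hexp : ∀ j : Fin n, lam j + (n - 1 - (j : ℕ)) = 2 * e j + 1 := fun j => by
    have := j.isLt
    simp only [e, hlam j]
    omega
  have hsq : ∀ (s : Fin n → Bool) i, (sgnv (K := K) s i * t i) ^ 2 = t i ^ 2 := fun s i => by
    rw [mul_pow, sgnv_sq, one_mul]
  have hinj : Function.Injective fun i => t i ^ 2 := fun i j h => by
    by_contra hij
    exact ht2 i j hij h
  simp only [hexp, mul_assoc]
  rw [sum_congr rfl fun s _ =>
    det_pow_odd_div_eq _ (fun i => mul_ne_zero (sgnv_ne_zero s i) (ht i)) e]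
  simp only [hsq, sum_const, card_univ, Fintype.card_fun, Fintype.card_bool, Fintype.card_fin,
    nsmul_eq_mul, MvPolynomial.eval_eq_det_div_prod_sub S e hS hinj]
  push_cast
  field_simp

/-- Pragacz–Ratajski for `LG(n)`: if `S` is the Schur polynomial `s_μ` in the Jacobi
bialternant sense (`S · ∏_{i<j}(X j − X i) = det((X i)^(μ j + n − 1 − j))`) and
`λ = 2μ + ρ(n)`, then the fixed-point sum for `s_λ(Q)` equals `S(t₁², …, t_n²)`. -/
theorem pushforward_schur_LG_eval (K : Type*) [Field K] (hK : (2 : K) ≠ 0)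
    (n : ℕ) (hn : 1 ≤ n)
    (t : Fin n → K) (ht : ∀ i, t i ≠ 0)
    (ht2 : ∀ i j : Fin n, i ≠ j → (t i) ^ 2 ≠ (t j) ^ 2)
    (μ : Fin n → ℕ) (hμ : Antitone μ)
    (lam : Fin n → ℕ) (hlam : ∀ j : Fin n, lam j = 2 * μ j + (n - (j : ℕ)))
    (S : MvPolynomial (Fin n) K)
    (hS : S * ∏ i, ∏ j ∈ Ioi i, (MvPolynomial.X j - MvPolynomial.X i)
        = (Matrix.of fun i j : Fin n =>
            (MvPolynomial.X i : MvPolynomial (Fin n) K) ^ (μ j + (n - 1 - (j : ℕ)))).det) :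
    ∑ s : Fin n → Bool,
      (Matrix.of fun i j : Fin n =>
          (sgnv (K := K) s i * t i) ^ (lam j + (n - 1 - (j : ℕ)))).det /
        ((∏ i, 2 * sgnv (K := K) s i * t i) *
          ∏ i, ∏ j ∈ Ioi i,
            (sgnv (K := K) s i * t i + sgnv (K := K) s j * t j) *
              (sgnv (K := K) s j * t j - sgnv (K := K) s i * t i))
      = MvPolynomial.eval (fun i => (t i) ^ 2) S :=
  pushforward_schur_LG_eval_general K hK n t ht ht2 μ lam hlam S hS
end

section
/- Let R be a commutative ring, n ≥ 1, t : Fin n → R, and let F be the formal power series in MvPowerSeries (Fin n) R determined by (∏ i, (1 − (t i)^2·(X i)^2)) * F = 1. Let μ : Fin n → ℕ be antitone and set λ j = 2·μ j + (n − j). For a permutation σ of Fin n let e_σ : Fin n →₀ ℕ be given by e_σ i = λ (σ⁻¹ i) + (n − 1 − σ⁻¹ i). Then Σ_{σ ∈ Perm(Fin n)} sign(σ) · (coefficient of the monomial e_σ in (∏ i, X i) * F) = det( (i,j) ↦ (t i)^(2·(μ j + (n − 1 − j))) ). (This is the iterated-residue-at-infinity evaluation of the push-forward of the Schur class s_λ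 over LG(n): the residue equals det((t_i^2)^{μ_j + n−1−j}) = s_μ(t^2)·∏_{i<j}(t_j^2 − t_i^2).) -/
/-!
`F` is the product over `i` of the one-variable series `∑ₖ (tᵢ²)ᵏ Xᵢ²ᵏ`, so its coefficient at an
exponent vector is the product of the one-variable coefficients. Since
`λⱼ + (n - 1 - j) = 2 (μⱼ + n - 1 - j) + 1`, removing the factor `∏ i, X i` leaves an even exponent
vector, the coefficient for `σ` is `∏ᵢ tᵢ ^ (2 (μ_{σ⁻¹ i} + n - 1 - σ⁻¹ i))`, and the signed sum over
`σ` is the Leibniz expansion of the determinant.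
-/

open Finset

namespace PowerSeries

variable {R : Type*} [CommRing R]

noncomputable def geomXPow (a : R) (m : ℕ) : R⟦X⟧ := mk fun k => if m ∣ k then a ^ (k / m) else 0

theorem one_sub_C_mul_X_pow_mul_geomXPow (a : R) {m : ℕ} (hm : 0 < m) :
    (1 - C a * X ^ m) * geomXPow a m = 1 := by
  ext k
  rw [sub_mul, one_mul, map_sub, mul_assoc, coeff_C_mul, coeff_X_pow_mul', coeff_one, geomXPow,
    coeff_mk]
  by_cases hk : m ≤ k
  · have hdvd : m ∣ k - m ↔ m ∣ k := Nat.dvd_sub_iff_left hk dvd_rfl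
    rw [if_pos hk, coeff_mk, if_neg (show k ≠ 0 by omega), Nat.div_eq_sub_div hm hk]
    simp only [hdvd]
    split_ifs <;> ring
  · rw [if_neg hk, mul_zero, sub_zero]
    by_cases hk0 : k = 0
    · simp [hk0]
    · rw [if_neg hk0, if_neg fun h => hk0 (Nat.eq_zero_of_dvd_of_lt h (by omega))]

theorem coeff_mul_geomXPow (a : R) {m : ℕ} (hm : 0 < m) (k : ℕ) :
    coeff (m * k) (geomXPow a m) = a ^ k := by
  rw [geomXPow, coeff_mk, if_pos (dvd_mul_right m k), Nat.mul_div_cancel_left k hm]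

end PowerSeries

namespace MvPowerSeries

variable {σ R : Type*} [CommRing R]

theorem coeff_one_sub_C_mul_X_pow_mul (d : σ →₀ ℕ) (a : R) (j : σ) (m : ℕ)
    (φ : MvPowerSeries σ R) :
    coeff d ((1 - C a * X j ^ m) * φ)
      = coeff d φ - if m ≤ d j then a * coeff (d - Finsupp.single j m) φ else 0 := by
  rw [X_pow_eq, ← monomial_zero_eq_C_apply, monomial_mul_monomial, zero_add, mul_one, sub_mul,
    one_mul, map_sub, coeff_monomial_mul]
  simp only [Finsupp.single_le_iff]

variable [Fintype σ]

/-- `∏ i, f i (X i)`, the product of one-variable series in pairwise distinct variables. -/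
noncomputable def prodSeries (f : σ → PowerSeries R) : MvPowerSeries σ R :=
  fun d => ∏ i, PowerSeries.coeff (d i) (f i)

theorem coeff_prodSeries (f : σ → PowerSeries R) (d : σ →₀ ℕ) :
    coeff d (prodSeries f) = ∏ i, PowerSeries.coeff (d i) (f i) := rfl

theorem prodSeries_one : prodSeries (fun _ : σ => (1 : PowerSeries R)) = 1 := by
  classical
  ext d
  simp only [coeff_prodSeries, PowerSeries.coeff_one, coeff_one, prod_ite_zero, mem_univ,
    true_implies, prod_const_one, Finsupp.ext_iff, Finsupp.coe_zero, Pi.zero_apply]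

theorem one_sub_C_mul_X_pow_mul_prodSeries [DecidableEq σ] (a : R) (j : σ) (m : ℕ)
    (f : σ → PowerSeries R) :
    (1 - C a * X j ^ m) * prodSeries f
      = prodSeries (Function.update f j ((1 - PowerSeries.C a * PowerSeries.X ^ m) * f j)) := by
  ext d
  set g := (1 - PowerSeries.C a * PowerSeries.X ^ m) * f j with hg
  have hshift : ∏ i ∈ {j}ᶜ, PowerSeries.coeff ((d - Finsupp.single j m) i) (f i)
      = ∏ i ∈ {j}ᶜ, PowerSeries.coeff (d i) (f i) :=
    prod_congr rfl fun i hi => by simp [Finsupp.single_eq_of_ne (by simpa using hi)]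
  have hupdate : ∏ i ∈ {j}ᶜ, PowerSeries.coeff (d i) (Function.update f j g i)
      = ∏ i ∈ {j}ᶜ, PowerSeries.coeff (d i) (f i) :=
    prod_congr rfl fun i hi => by rw [Function.update_of_ne (by simpa using hi)]
  rw [coeff_one_sub_C_mul_X_pow_mul, coeff_prodSeries, coeff_prodSeries, coeff_prodSeries,
    Fintype.prod_eq_mul_prod_compl j, Fintype.prod_eq_mul_prod_compl j,
    Fintype.prod_eq_mul_prod_compl j, hshift, hupdate, Function.update_self, hg, sub_mul, one_mul,
    map_sub, mul_assoc, PowerSeries.coeff_C_mul, PowerSeries.coeff_X_pow_mul']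
  simp only [Finsupp.tsub_apply, Finsupp.single_eq_same]
  split_ifs <;> ring

theorem prod_one_sub_C_mul_X_pow_mul_prodSeries (a : σ → R) (m : ℕ) (f : σ → PowerSeries R) :
    (∏ i, (1 - C (a i) * X i ^ m)) * prodSeries f
      = prodSeries fun i => (1 - PowerSeries.C (a i) * PowerSeries.X ^ m) * f i := by
  classical
  suffices ∀ s : Finset σ, (∏ i ∈ s, (1 - C (a i) * X i ^ m)) * prodSeries f
      = prodSeries (s.piecewise (fun i => (1 - PowerSeries.C (a i) * PowerSeries.X ^ m) * f i) f)
    by simpa using this univ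
  intro s
  induction s using Finset.induction_on with
  | empty => simp
  | insert j s hj ih =>
    rw [prod_insert hj, mul_assoc, ih, one_sub_C_mul_X_pow_mul_prodSeries, piecewise_insert,
      piecewise_eq_of_notMem _ _ _ hj]

theorem coeff_add_one_prod_X_mul (d : σ → ℕ) (φ : MvPowerSeries σ R) :
    coeff (Finsupp.equivFunOnFinite.symm fun i => d i + 1) ((∏ i, X i) * φ)
      = coeff (Finsupp.equivFunOnFinite.symm d) φ := by
  have hX : ∏ i, (X i : MvPowerSeries σ R) = monomial (∑ i, Finsupp.single i 1) 1 := by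
    simp only [X_def, prod_monomial, prod_const_one]
  have hd : (Finsupp.equivFunOnFinite.symm fun i => d i + 1)
      = ∑ i, Finsupp.single i 1 + Finsupp.equivFunOnFinite.symm d := by
    ext i
    simp [add_comm]
  rw [hX, hd, coeff_add_monomial_mul, one_mul]

end MvPowerSeries

theorem Matrix.det_eq_sum_sign_mul_prod_apply_inv {n R : Type*} [DecidableEq n] [Fintype n]
    [CommRing R] (M : Matrix n n R) :
    M.det = ∑ σ : Equiv.Perm n, ((Equiv.Perm.sign σ : ℤ) : R) * ∏ i, M i (σ⁻¹ i) := by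
  rw [← det_transpose, det_apply']
  exact Fintype.sum_equiv (Equiv.inv _) _ _ fun σ => by simp

theorem residue_schur_LG_general (R : Type*) [CommRing R] (n : ℕ)
    (t : Fin n → R) (F : MvPowerSeries (Fin n) R)
    (hF : (∏ i, (1 - MvPowerSeries.C ((t i) ^ 2) * (MvPowerSeries.X i) ^ 2)) * F = 1)
    (μ : Fin n → ℕ)
    (lam : Fin n → ℕ) (hlam : ∀ j : Fin n, lam j = 2 * μ j + (n - (j : ℕ))) :
    ∑ σ : Equiv.Perm (Fin n),
      ((Equiv.Perm.sign σ : ℤ) : R) *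
        MvPowerSeries.coeff
          (Finsupp.equivFunOnFinite.symm fun i => lam (σ⁻¹ i) + (n - 1 - ((σ⁻¹ i : Fin n) : ℕ)))
          ((∏ i, MvPowerSeries.X i) * F)
      = (Matrix.of fun i j : Fin n => (t i) ^ (2 * (μ j + (n - 1 - (j : ℕ))))).det := by
  set e : Fin n → ℕ := fun j => μ j + (n - 1 - (j : ℕ))
  have hF_eq : F = MvPowerSeries.prodSeries fun i => PowerSeries.geomXPow (t i ^ 2) 2 := by
    refine left_inv_eq_right_inv (by rw [mul_comm, hF]) ?_
    simp_rw [MvPowerSeries.prod_one_sub_C_mul_X_pow_mul_prodSeries,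
      PowerSeries.one_sub_C_mul_X_pow_mul_geomXPow _ two_pos, MvPowerSeries.prodSeries_one]
  have hcoeff (σ : Equiv.Perm (Fin n)) :
      MvPowerSeries.coeff
          (Finsupp.equivFunOnFinite.symm fun i => lam (σ⁻¹ i) + (n - 1 - ((σ⁻¹ i : Fin n) : ℕ)))
          ((∏ i, MvPowerSeries.X i) * F)
        = ∏ i, t i ^ (2 * e (σ⁻¹ i)) := by
    have hexp : (fun i => lam (σ⁻¹ i) + (n - 1 - ((σ⁻¹ i : Fin n) : ℕ)))
        = fun i => 2 * e (σ⁻¹ i) + 1 := by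
      funext i
      have := (σ⁻¹ i).isLt
      simp only [e, hlam]
      omega
    simp only [hexp, MvPowerSeries.coeff_add_one_prod_X_mul, hF_eq,
      MvPowerSeries.coeff_prodSeries, Finsupp.coe_equivFunOnFinite_symm, PowerSeries.coeff_mul_geomXPow _ two_pos, pow_mul]
  simp only [hcoeff, Matrix.det_eq_sum_sign_mul_prod_apply_inv, Matrix.of_apply, e]

/-- Iterated-residue-at-infinity evaluation of the push-forward of `s_λ` over `LG(n)`
for `λ = 2μ + ρ(n)`: the signed sum of the coefficients of `(∏ i, X i) · F`, where
`F` is the expansion of `∏ i 1/(1 − t_i² X_i²)`, equals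
`det((t_i²)^(μ_j + n − 1 − j))`. -/
theorem residue_schur_LG (R : Type*) [CommRing R] (n : ℕ) (hn : 1 ≤ n)
    (t : Fin n → R) (F : MvPowerSeries (Fin n) R)
    (hF : (∏ i, (1 - MvPowerSeries.C ((t i) ^ 2) * (MvPowerSeries.X i) ^ 2)) * F = 1)
    (μ : Fin n → ℕ) (hμ : Antitone μ)
    (lam : Fin n → ℕ) (hlam : ∀ j : Fin n, lam j = 2 * μ j + (n - (j : ℕ))) :
    ∑ σ : Equiv.Perm (Fin n),
      ((Equiv.Perm.sign σ : ℤ) : R) *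
        MvPowerSeries.coeff
          (Finsupp.equivFunOnFinite.symm fun i => lam (σ⁻¹ i) + (n - 1 - ((σ⁻¹ i : Fin n) : ℕ)))
          ((∏ i, MvPowerSeries.X i) * F)
      = (Matrix.of fun i j : Fin n => (t i) ^ (2 * (μ j + (n - 1 - (j : ℕ))))).det :=
  residue_schur_LG_general R n t F hF μ lam hlam
end

section
/- Let R be a commutative ring, n ≥ 1, t : Fin n → R, and let F be the formal power series in MvPowerSeries (Fin n) R determined by (∏ i, (1 − (t i)^2·(X i)^2)) * F = 1. Let λ : Fin n → ℕ be antitone and suppose there exists j ∈ Fin n with λ j + (n − 1 − j) even. For a permutation σ of Fin n let e_σ : Fin n →₀ ℕ be given by e_σ i = λ (σ⁻¹ i) + (n − 1 − σ⁻¹ i). Then Σ_{σ ∈ Perm(Fin n)} sign(σ) · (coefficient of the monomial e_σ in (∏ i, X i) * F) = 0. (Vanishing of the iterated residue for LG(n) when λ is not of the form 2μ + ρ(n).) -/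
/-!
The sign-twisted sum vanishes term by term. The series `F` inverts a product of factors
`1 - t_i^2 X_i^2` in which every exponent is even in every variable, and power series with
this property form a subring closed under taking inverses; so `F` is even in every variable.
Multiplying by `∏ i, X i` shifts every exponent by one, so the coefficient of `e_σ` in
`(∏ i, X i) * F` is zero as soon as some coordinate of `e_σ` is even, and
`e_σ (σ j) = λ j + (n - 1 - j)`.
-/

open Finset

namespace MvPowerSeries

variable {σ R : Type*} [CommRing R]

def restrictSupportSubring (S : AddSubmonoid (σ →₀ ℕ)) : Subring (MvPowerSeries σ R) where
  carrier := {f | ∀ e ∉ S, coeff e f = 0}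
  zero_mem' _ _ := map_zero _
  one_mem' e he := by
    classical
    rw [coeff_one, if_neg fun (h : e = 0) => he (h ▸ S.zero_mem)]
  add_mem' hf hg e he := by rw [map_add, hf e he, hg e he, add_zero]
  neg_mem' hf e he := by rw [map_neg, hf e he, neg_zero]
  mul_mem' {f g} hf hg e he := by
    classical
    rw [coeff_mul]
    refine sum_eq_zero fun p hp => ?_
    rw [← mem_antidiagonal.mp hp] at he
    by_cases h₁ : p.1 ∈ S
    · rw [hg p.2 fun h₂ => he (S.add_mem h₁ h₂), mul_zero]
    · rw [hf p.1 h₁, zero_mul]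

theorem mem_restrictSupportSubring_of_mul_eq_one {S : AddSubmonoid (σ →₀ ℕ)}
    (hS : ∀ a ∈ S, ∀ b, a + b ∈ S → b ∈ S) {P F : MvPowerSeries σ R}
    (hP : P ∈ restrictSupportSubring S) (hPF : P * F = 1) :
    F ∈ restrictSupportSubring S := by
  classical
  -- `G` is `F` with its coefficients outside `S` erased; as `P` lives on the saturated `S`,
  -- it is still a right inverse of `P`.
  let G : MvPowerSeries σ R := fun e => if e ∈ S then coeff e F else 0
  have coeff_G (e : σ →₀ ℕ) : coeff e G = if e ∈ S then coeff e F else 0 := rfl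
  have hPG : P * G = 1 := by
    ext e
    by_cases he : e ∈ S
    · rw [← hPF, coeff_mul, coeff_mul]
      refine sum_congr rfl fun p hp => ?_
      rw [← mem_antidiagonal.mp hp] at he
      by_cases h₁ : p.1 ∈ S
      · rw [coeff_G, if_pos (hS _ h₁ _ he)]
      · rw [hP _ h₁, zero_mul, zero_mul]
    · rw [(one_mem _ : (1 : MvPowerSeries σ R) ∈ restrictSupportSubring S) e he, coeff_mul]
      refine sum_eq_zero fun p hp => ?_
      rw [← mem_antidiagonal.mp hp] at he
      by_cases h₁ : p.1 ∈ S
      · rw [coeff_G, if_neg fun h₂ => he (S.add_mem h₁ h₂), mul_zero]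
      · rw [hP _ h₁, zero_mul]
  have hFG : F = G := left_inv_eq_right_inv (by rw [mul_comm, hPF]) hPG
  intro e he
  rw [hFG, coeff_G, if_neg he]

variable (σ) in
def evenExponents : AddSubmonoid (σ →₀ ℕ) where
  carrier := {e | ∀ i, Even (e i)}
  zero_mem' _ := Even.zero
  add_mem' ha hb i := (ha i).add (hb i)

theorem mem_evenExponents_of_add {a b : σ →₀ ℕ} (ha : a ∈ evenExponents σ)
    (hab : a + b ∈ evenExponents σ) : b ∈ evenExponents σ := fun i =>
  (Nat.even_add.mp (hab i)).mp (ha i)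

theorem prod_one_sub_C_mul_X_sq_mem (s : Finset σ) (a : σ → R) :
    ∏ i ∈ s, (1 - C (a i) * X i ^ 2) ∈ restrictSupportSubring (evenExponents σ) := by
  refine prod_mem fun i _ => sub_mem (one_mem _) (mul_mem ?_ ?_)
  · intro e he
    classical
    rw [coeff_C, if_neg fun (h : e = 0) => he (h ▸ (evenExponents σ).zero_mem)]
  · intro e he
    classical
    rw [coeff_X_pow, if_neg]
    rintro rfl
    refine he fun j => ?_
    rw [Finsupp.single_apply]
    split_ifs
    exacts [even_two, Even.zero]

theorem prod_X_eq_monomial [Fintype σ] :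
    ∏ i, (X i : MvPowerSeries σ R) = monomial (∑ i, Finsupp.single i 1) 1 := by
  simp only [X_def, prod_monomial, prod_const_one]

theorem coeff_prod_X_mul_eq_zero [Fintype σ] {F : MvPowerSeries σ R}
    (hF : F ∈ restrictSupportSubring (evenExponents σ)) {e : σ →₀ ℕ} {k : σ} (hk : Even (e k)) :
    coeff e ((∏ i, X i) * F) = 0 := by
  classical
  set d : σ →₀ ℕ := ∑ i, Finsupp.single i 1
  have hd : d k = 1 := by simp [d, Finsupp.finsetSum_apply, Finsupp.single_apply]
  rw [prod_X_eq_monomial, coeff_monomial_mul]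
  split_ifs with hle
  · have hodd : Odd ((e - d) k) := by
      rw [Finsupp.tsub_apply, hd]
      exact Nat.Even.sub_odd (hd ▸ hle k) hk odd_one
    rw [hF _ fun h => Nat.not_even_iff_odd.mpr hodd (h k), mul_zero]
  · rfl

end MvPowerSeries

theorem residue_schur_LG_vanishing_general (R : Type*) [CommRing R] (n : ℕ)
    (t : Fin n → R) (F : MvPowerSeries (Fin n) R)
    (hF : (∏ i, (1 - MvPowerSeries.C (σ := Fin n) (R := R) ((t i) ^ 2) * (MvPowerSeries.X i) ^ 2)) * F = 1)
    (lam : Fin n → ℕ)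
    (hpar : ∃ j : Fin n, Even (lam j + (n - 1 - (j : ℕ)))) :
    ∑ σ : Equiv.Perm (Fin n),
      ((Equiv.Perm.sign σ : ℤ) : R) *
        MvPowerSeries.coeff (R := R)
          (Finsupp.equivFunOnFinite.symm fun i => lam (σ⁻¹ i) + (n - 1 - ((σ⁻¹ i : Fin n) : ℕ)))
          ((∏ i, MvPowerSeries.X i) * F)
      = 0 := by
  obtain ⟨j, hj⟩ := hpar
  have hFeven : F ∈ MvPowerSeries.restrictSupportSubring (MvPowerSeries.evenExponents (Fin n)) :=
    MvPowerSeries.mem_restrictSupportSubring_of_mul_eq_one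
      (fun _ ha _ => MvPowerSeries.mem_evenExponents_of_add ha)
      (MvPowerSeries.prod_one_sub_C_mul_X_sq_mem _ _) hF
  refine sum_eq_zero fun σ _ => ?_
  rw [MvPowerSeries.coeff_prod_X_mul_eq_zero hFeven (k := σ j) (by simpa using hj), mul_zero]

/-- Vanishing of the iterated residue for `LG(n)` when `λ` is not of the form
`2μ + ρ(n)`, i.e. when some `λ j + (n − 1 − j)` is even. -/
theorem residue_schur_LG_vanishing (R : Type*) [CommRing R] (n : ℕ) (hn : 1 ≤ n)
    (t : Fin n → R) (F : MvPowerSeries (Fin n) R)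
    (hF : (∏ i, (1 - MvPowerSeries.C (σ := Fin n) (R := R) ((t i) ^ 2) * (MvPowerSeries.X i) ^ 2)) * F = 1)
    (lam : Fin n → ℕ) (hlam : Antitone lam)
    (hpar : ∃ j : Fin n, Even (lam j + (n - 1 - (j : ℕ)))) :
    ∑ σ : Equiv.Perm (Fin n),
      ((Equiv.Perm.sign σ : ℤ) : R) *
        MvPowerSeries.coeff (R := R)
          (Finsupp.equivFunOnFinite.symm fun i => lam (σ⁻¹ i) + (n - 1 - ((σ⁻¹ i : Fin n) : ℕ)))
          ((∏ i, MvPowerSeries.X i) * F)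
      = 0 :=
  residue_schur_LG_vanishing_general R n t F hF lam hpar
end

section
/- Let n ≥ 1 and let λ : Fin n → ℕ be antitone. Then λ j + (n − 1 − j) is odd for every j ∈ Fin n if and only if there exists an antitone μ : Fin n → ℕ such that λ j = 2·μ j + (n − j) for every j. (The residue can be nonzero only when λ = 2μ + ρ(n) for some partition μ; antitonicity of μ is automatic from the parity condition and antitonicity of λ.) -/
/-! Consecutive terms `λ j + (n - 1 - j)` differ by `λ j - λ (j + 1) + 1`, so if they are all odd
then every step `λ j - λ (j + 1)` is odd, in particular nonzero: `λ` is strictly decreasing. Hence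
`λ j + j` is antitone, and it is at least `n` because the last part is odd, hence positive. Then
`μ j = (λ j + j - n) / 2` is antitone, and exact division by `2` is the parity hypothesis again. -/

namespace Fin

variable {m : ℕ} {f : Fin (m + 1) → ℕ}

lemma strictAnti_of_antitone_of_odd (hf : Antitone f) (hodd : ∀ j, Odd (f j + (m - j))) :
    StrictAnti f :=
  strictAnti_iff_succ_lt.2 fun i => by
    have hle := hf (castSucc_le_succ i)
    have hsucc := Nat.odd_iff.1 (hodd i.succ)
    have hcast := Nat.odd_iff.1 (hodd i.castSucc)
    simp only [val_succ, val_castSucc] at hsucc hcast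
    omega

lemma antitone_add_val_of_strictAnti (hf : StrictAnti f) : Antitone fun j => f j + j :=
  antitone_iff_succ_le.2 fun i => by
    have := hf (castSucc_lt_succ (i := i))
    simp only [val_succ, val_castSucc]
    omega

lemma sub_val_le_of_strictAnti (hf : StrictAnti f) (hlast : 0 < f (last m)) (j : Fin (m + 1)) :
    m + 1 - j ≤ f j := by
  have := antitone_add_val_of_strictAnti hf (le_last j)
  simp only [val_last] at this
  omega

end Fin

theorem parity_iff_staircase_general (n : ℕ)
    (lam : Fin n → ℕ) (hlam : Antitone lam) :
    (∀ j : Fin n, Odd (lam j + (n - 1 - (j : ℕ)))) ↔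
      ∃ μ : Fin n → ℕ, Antitone μ ∧ ∀ j : Fin n, lam j = 2 * μ j + (n - (j : ℕ)) := by
  rcases n with _ | m
  · exact iff_of_true finZeroElim ⟨0, antitone_const, finZeroElim⟩
  simp only [add_tsub_cancel_right]
  constructor
  · intro hodd
    have hstrict := Fin.strictAnti_of_antitone_of_odd hlam hodd
    have hstair := Fin.sub_val_le_of_strictAnti hstrict (by simpa using (hodd (Fin.last m)).pos)
    have hhalf : Monotone fun x : ℕ => (x - (m + 1)) / 2 :=
      fun _ _ h => Nat.div_le_div_right (Nat.sub_le_sub_right h _)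
    refine ⟨fun j => (lam j + j - (m + 1)) / 2,
      hhalf.comp_antitone (Fin.antitone_add_val_of_strictAnti hstrict), fun j => ?_⟩
    have hparity := Nat.odd_iff.1 (hodd j)
    have hbound := hstair j
    dsimp only
    omega
  · rintro ⟨μ, -, hμ⟩ j
    rw [hμ j, Nat.odd_iff]
    have := j.isLt
    omega

/-- For an antitone `λ : Fin n → ℕ`, all `λ j + (n − 1 − j)` are odd iff
`λ = 2μ + ρ(n)` for some antitone `μ`, where `ρ(n) j = n − j`. -/
theorem parity_iff_staircase (n : ℕ) (hn : 1 ≤ n)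
    (lam : Fin n → ℕ) (hlam : Antitone lam) :
    (∀ j : Fin n, Odd (lam j + (n - 1 - (j : ℕ)))) ↔
      ∃ μ : Fin n → ℕ, Antitone μ ∧ ∀ j : Fin n, lam j = 2 * μ j + (n - (j : ℕ)) :=
  parity_iff_staircase_general n lam hlam
end

section
/- Let n ≥ 1 and let μ : Fin n → ℕ be antitone. In the polynomial ring MvPolynomial (Fin n) ℤ, the Vandermonde product ∏_{i<j} (X j − X i) divides the determinant of the n×n matrix with entries (i,j) ↦ (X i)^(μ j + (n − 1 − j)), and the quotient polynomial is symmetric, i.e. invariant under every permutation of the variables. (Well-definedness of the Jacobi bialternant definition of the Schur polynomial s_μ.) -/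
/-!
Substituting `X j` for `X i` makes two rows of the alternant `det (X i ^ e j)` equal, so each
`X j - X i` divides it. These linear forms are pairwise non-associated primes, hence their product,
the Vandermonde determinant, divides the alternant too. Both determinants change by `sign σ` when
the variables are permuted by `σ`, so in the domain `ℤ[X]` their quotient is symmetric.
-/

open Finset

namespace MvPolynomial

open Equiv

variable {σ R : Type*} [CommRing R]

def IsAlternating [Fintype σ] [DecidableEq σ] (p : MvPolynomial σ R) : Prop :=
  ∀ e : Perm σ, rename e p = Perm.sign e • p

theorem IsAlternating.isSymmetric_of_mul [Fintype σ] [DecidableEq σ] [IsDomain R]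
    {V S : MvPolynomial σ R} (hVS : (V * S).IsAlternating) (hV : V.IsAlternating)
    (hV0 : V ≠ 0) : S.IsSymmetric := by
  intro e
  have h : Perm.sign e • (V * rename e S) = Perm.sign e • (V * S) := by
    rw [← hVS e, map_mul, hV e, smul_mul_assoc]
  exact mul_left_cancel₀ hV0 (smul_left_cancel _ h)

theorem dvd_sub_aeval_of_forall_dvd_X_sub {d : MvPolynomial σ R} {g : σ → MvPolynomial σ R}
    (hg : ∀ k, d ∣ X k - g k) (p : MvPolynomial σ R) : d ∣ p - aeval g p := by
  induction p using MvPolynomial.induction_on with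
  | C a => simp only [aeval_C, algebraMap_eq, sub_self, dvd_zero]
  | add p q hp hq =>
    rw [map_add, add_sub_add_comm]
    exact dvd_add hp hq
  | mul_X p k hp =>
    rw [map_mul, aeval_X]
    have h : p * X k - aeval g p * g k = (p - aeval g p) * X k + aeval g p * (X k - g k) := by
      ring
    rw [h]
    exact dvd_add (hp.mul_right _) ((hg k).mul_left _)

theorem X_sub_X_dvd_of_aeval_update_eq_zero [DecidableEq σ] {i j : σ} {p : MvPolynomial σ R}
    (hp : aeval (Function.update (X : σ → MvPolynomial σ R) i (X j)) p = 0) :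
    X j - X i ∣ p := by
  have hg : ∀ k, (X j - X i : MvPolynomial σ R) ∣ X k - Function.update X i (X j) k := by
    intro k
    rcases eq_or_ne k i with rfl | hk
    · simp [dvd_sub_comm]
    · simp [hk]
  have h := dvd_sub_aeval_of_forall_dvd_X_sub hg p
  rwa [hp, sub_zero] at h

theorem prime_X_sub_X [IsDomain R] {i j : σ} (h : i ≠ j) :
    Prime (X j - X i : MvPolynomial σ R) := by
  classical
  -- as a polynomial in `X j` over the remaining variables, `X j - X i` is `X - C (X i)`
  let e : MvPolynomial σ R ≃ₐ[R] Polynomial (MvPolynomial {k // k ≠ j} R) :=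
    (renameEquiv R (optionSubtypeNe j).symm).trans (optionEquivLeft R {k // k ≠ j})
  have he : e (X j - X i) = Polynomial.X - Polynomial.C (X ⟨i, h⟩) := by
    simp [e, optionSubtypeNe_symm_of_ne h]
  rw [← MulEquiv.prime_iff e.toMulEquiv]
  exact he ▸ Polynomial.prime_X_sub_C _

theorem eq_and_eq_or_of_X_sub_X_dvd [Nontrivial R] {i j k l : σ} (hkl : k ≠ l)
    (h : (X j - X i : MvPolynomial σ R) ∣ X l - X k) : k = i ∧ l = j ∨ k = j ∧ l = i := by
  classical
  -- the indicator of some `m ∈ {k, l} \ {i, j}` would kill `X j - X i` but not `X l - X k`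
  have mem : ∀ m, m = k ∨ m = l → m = i ∨ m = j := by
    intro m hm
    by_contra! hmij
    have := map_dvd (eval (Pi.single m 1)) h
    rcases hm with rfl | rfl <;> simp [hmij.1.symm, hmij.2.symm, hkl, hkl.symm] at this
  rcases mem k (.inl rfl) with rfl | rfl <;> rcases mem l (.inr rfl) with rfl | rfl <;> simp_all

section Alternant

variable {ι : Type*} [Fintype ι] [DecidableEq ι]

variable (R) in
noncomputable def alternant (e : ι → ℕ) : MvPolynomial ι R :=
  (Matrix.of fun i j => X i ^ e j).det

theorem isAlternating_alternant (e : ι → ℕ) : (alternant R e).IsAlternating := by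
  intro s
  have h : (rename s).mapMatrix (Matrix.of fun i j => (X i : MvPolynomial ι R) ^ e j) =
      (Matrix.of fun i j => X i ^ e j).submatrix s id := by
    ext i j
    simp
  rw [alternant, AlgHom.map_det, h, Matrix.det_permute, Units.smul_def, zsmul_eq_mul]

theorem X_sub_X_dvd_alternant {i j : ι} (h : i ≠ j) (e : ι → ℕ) :
    X j - X i ∣ alternant R e := by
  apply X_sub_X_dvd_of_aeval_update_eq_zero
  rw [alternant, AlgHom.map_det]
  apply Matrix.det_zero_of_row_eq h
  ext k
  simp [h.symm]

end Alternant

theorem prod_X_sub_X_eq_alternant (n : ℕ) :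
    ∏ i : Fin n, ∏ j ∈ Ioi i, (X j - X i) = alternant R (fun j : Fin n => (j : ℕ)) :=
  (Matrix.det_vandermonde _).symm

theorem prod_X_sub_X_ne_zero [IsDomain R] (n : ℕ) :
    ∏ i : Fin n, ∏ j ∈ Ioi i, (X j - X i : MvPolynomial (Fin n) R) ≠ 0 :=
  prod_ne_zero_iff.mpr fun _ _ => prod_ne_zero_iff.mpr fun _ hj =>
    (prime_X_sub_X (mem_Ioi.mp hj).ne).ne_zero

theorem prod_X_sub_X_dvd [IsDomain R] [UniqueFactorizationMonoid R] {n : ℕ}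
    {p : MvPolynomial (Fin n) R} (h : ∀ i j, i < j → X j - X i ∣ p) :
    ∏ i : Fin n, ∏ j ∈ Ioi i, (X j - X i) ∣ p := by
  rw [prod_sigma']
  refine prod_dvd_of_isRelPrime ?_ fun ⟨i, j⟩ hij => h i j (by simpa using hij)
  rintro ⟨i, j⟩ hij ⟨k, l⟩ hkl hne
  simp only [mem_coe, mem_sigma, mem_univ, mem_Ioi, true_and] at hij hkl
  refine (prime_X_sub_X hij.ne).irreducible.isRelPrime_iff_not_dvd.mpr fun hd => hne ?_
  have := eq_and_eq_or_of_X_sub_X_dvd (R := R) hkl.ne hd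
  obtain ⟨rfl, rfl⟩ : k = i ∧ l = j := by omega
  rfl

end MvPolynomial

open MvPolynomial

theorem jacobi_bialternant_well_defined_general (n : ℕ)
    (μ : Fin n → ℕ) :
    ∃ S : MvPolynomial (Fin n) ℤ,
      (Matrix.of fun i j : Fin n =>
          (MvPolynomial.X i : MvPolynomial (Fin n) ℤ) ^ (μ j + (n - 1 - (j : ℕ)))).det
        = (∏ i, ∏ j ∈ Ioi i, (MvPolynomial.X j - MvPolynomial.X i)) * S
      ∧ S.IsSymmetric := by
  obtain ⟨S, hS⟩ := prod_X_sub_X_dvd (R := ℤ) fun i j hij =>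
    X_sub_X_dvd_alternant hij.ne fun j : Fin n => μ j + (n - 1 - (j : ℕ))
  refine ⟨S, hS, IsAlternating.isSymmetric_of_mul ?_ ?_ (prod_X_sub_X_ne_zero n)⟩
  · rw [← hS]
    exact isAlternating_alternant _
  · rw [prod_X_sub_X_eq_alternant]
    exact isAlternating_alternant _

/-- Well-definedness of the Jacobi bialternant definition of the Schur polynomial:
the Vandermonde product `∏_{i<j} (X j − X i)` divides
`det((i,j) ↦ (X i)^(μ j + n − 1 − j))` in `MvPolynomial (Fin n) ℤ`,
and the quotient is a symmetric polynomial. -/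
theorem jacobi_bialternant_well_defined (n : ℕ) (hn : 1 ≤ n)
    (μ : Fin n → ℕ) (hμ : Antitone μ) :
    ∃ S : MvPolynomial (Fin n) ℤ,
      (Matrix.of fun i j : Fin n =>
          (MvPolynomial.X i : MvPolynomial (Fin n) ℤ) ^ (μ j + (n - 1 - (j : ℕ)))).det
        = (∏ i, ∏ j ∈ Ioi i, (MvPolynomial.X j - MvPolynomial.X i)) * S
      ∧ S.IsSymmetric :=
  jacobi_bialternant_well_defined_general n μ
end

section
/- Let R be a commutative ring, n ≥ 1, t : Fin n → R, and let F be the formal power series in MvPowerSeries (Fin n) R determined by (∏ i, (1 − (t i)^2·(X i)^2)) * F = 1. Let μ : Fin n → ℕ be antitone and set λ j = 2·μ j + (n − 1 − j) (i.e. λ = 2μ + ρ(n−1), where ρ(n−1) has parts n−1, n−2, …, 1, 0). For a permutation σ of Fin n let e_σ : Fin n →₀ ℕ be given by e_σ i = λ (σ⁻¹ i) + (n − 1 − σ⁻¹ i). Then 2^(n−1) · Σ_{σ ∈ Perm(Fin n)} sign(σ) · (coefficient of the monomial e_σ in F) = 2^(n−1) · det( (i,j) ↦ (t i)^(2·(μ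 j + (n − 1 − j))) ). (Iterated-residue evaluation of the push-forward of s_λ over the even orthogonal Grassmannian OG(n,2n): the extra factor 2^{n−1} z_1⋯z_n in the residue formula shifts every exponent by one, so the staircase ρ(n−1) replaces ρ(n), and ω_* s_λ(Q) = 2^{n−1}·s_μ(t^2)·(up to the Vandermonde-in-squares normalization).) -/
/-!
`F` is forced to be `∏ i, 1 / (1 - t_i² X_i²)`, whose coefficient at `e` is `∏ i, t_i ^ e_i`
when every `e_i` is even and `0` otherwise. Multiplying such a "product-coefficient" series by
`1 - c X_j^d` only changes its `j`-th coordinate factor, so the inverse can be checked one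
variable at a time. All exponents `e_σ i = 2 (μ_j + n - 1 - j)` (with `j = σ⁻¹ i`) are even, so
the signed sum of coefficients is exactly the Leibniz expansion of the determinant.
-/

open Finset

/-- The coefficient of `X ^ k` in `1 / (1 - c X ^ d)`. -/
def geomCoeff {R : Type*} [Semiring R] (d : ℕ) (c : R) (k : ℕ) : R :=
  if d ∣ k then c ^ (k / d) else 0

theorem geomCoeff_mul {R : Type*} [Semiring R] {d : ℕ} (hd : 0 < d) (c : R) (m : ℕ) :
    geomCoeff d c (d * m) = c ^ m := by
  simp [geomCoeff, hd]

theorem geomCoeff_sub_mul_geomCoeff {R : Type*} [Ring R] {d : ℕ} (hd : 0 < d) (c : R) (k : ℕ) :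
    (geomCoeff d c k - if d ≤ k then c * geomCoeff d c (k - d) else 0) =
      if k = 0 then 1 else 0 := by
  rcases lt_or_ge k d with hk | hk
  · rcases Nat.eq_zero_or_pos k with rfl | hk0
    · simp [geomCoeff, hd.ne']
    · simp [geomCoeff, hk0.ne', Nat.not_dvd_of_pos_of_lt hk0 hk, hk]
  · obtain ⟨m, rfl⟩ := Nat.exists_eq_add_of_le' hk
    by_cases hm : d ∣ m
    · simp [geomCoeff, hm, hd, hd.ne', Nat.add_div_right, pow_succ']
    · simp [geomCoeff, hm, hd.ne']

namespace MvPowerSeries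

variable {σ R : Type*} [CommRing R]

theorem C_mul_X_pow_eq_monomial (s : σ) (a : R) (d : ℕ) :
    C a * X s ^ d = monomial (Finsupp.single s d) a := by
  rw [X_pow_eq, ← monomial_zero_eq_C_apply, monomial_mul_monomial, zero_add, mul_one]

variable [Fintype σ]

/-- The product over `i` of the univariate series `∑ k, f i k • X_i ^ k`. -/
def prodCoeffs (f : σ → ℕ → R) : MvPowerSeries σ R := fun e => ∏ i, f i (e i)

theorem coeff_prodCoeffs (f : σ → ℕ → R) (e : σ →₀ ℕ) :
    coeff e (prodCoeffs f) = ∏ i, f i (e i) := rfl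

variable [DecidableEq σ]

theorem prodCoeffs_ite_eq_zero :
    prodCoeffs (fun (_ : σ) k => if k = 0 then (1 : R) else 0) = 1 := by
  ext e
  simp [coeff_prodCoeffs, coeff_one, prod_ite_zero, Finsupp.ext_iff]

theorem one_sub_monomial_mul_prodCoeffs (f : σ → ℕ → R) (j : σ) (d : ℕ) (c : R) :
    (1 - monomial (Finsupp.single j d) c) * prodCoeffs f =
      prodCoeffs (Function.update f j fun k => f j k - if d ≤ k then c * f j (k - d) else 0) := by
  ext e
  have hshift : ∏ i ∈ {j}ᶜ, f i ((e - Finsupp.single j d) i) = ∏ i ∈ {j}ᶜ, f i (e i) :=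
    prod_congr rfl fun i hi => by simp [Ne.symm (by simpa using hi : i ≠ j)]
  have hupdate : ∏ i ∈ {j}ᶜ,
      Function.update f j (fun k => f j k - if d ≤ k then c * f j (k - d) else 0) i (e i) =
        ∏ i ∈ {j}ᶜ, f i (e i) :=
    prod_congr rfl fun i hi => by rw [Function.update_of_ne (by simpa using hi)]
  rw [sub_mul, one_mul, map_sub, coeff_monomial_mul, coeff_prodCoeffs, coeff_prodCoeffs,
    coeff_prodCoeffs, Fintype.prod_eq_mul_prod_compl j, Fintype.prod_eq_mul_prod_compl j,
    Fintype.prod_eq_mul_prod_compl j, hshift, hupdate, Function.update_self]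
  simp only [Finsupp.single_le_iff, Finsupp.tsub_apply, Finsupp.single_eq_same]
  split_ifs <;> ring

variable {d : ℕ}

theorem prod_one_sub_monomial_mul_prodCoeffs_geomCoeff (hd : 0 < d) (c : σ → R) (S : Finset σ) :
    (∏ i ∈ S, (1 - monomial (Finsupp.single i d) (c i))) *
        prodCoeffs (fun i => geomCoeff d (c i)) =
      prodCoeffs (fun i => if i ∈ S then fun k => if k = 0 then 1 else 0 else geomCoeff d (c i)) := by
  induction S using Finset.induction_on with
  | empty => simp
  | insert j S hj ih =>
    rw [prod_insert hj, mul_assoc, ih, one_sub_monomial_mul_prodCoeffs]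
    congr 1
    ext i k
    by_cases hij : i = j
    · subst hij
      simp [hj, geomCoeff_sub_mul_geomCoeff hd]
    · simp [hij]

theorem eq_prodCoeffs_geomCoeff_of_mul_eq_one (hd : 0 < d) (c : σ → R) {F : MvPowerSeries σ R}
    (hF : (∏ i, (1 - C (c i) * X i ^ d)) * F = 1) :
    F = prodCoeffs (fun i => geomCoeff d (c i)) := by
  refine left_inv_eq_right_inv (by rwa [mul_comm]) ?_
  simp only [C_mul_X_pow_eq_monomial]
  rw [prod_one_sub_monomial_mul_prodCoeffs_geomCoeff hd]
  simpa using prodCoeffs_ite_eq_zero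

end MvPowerSeries

theorem residue_schur_OG_even_general (R : Type*) [CommRing R] (n : ℕ)
    (t : Fin n → R) (F : MvPowerSeries (Fin n) R)
    (hF : (∏ i, (1 - (MvPowerSeries.C : R →+* MvPowerSeries (Fin n) R) ((t i) ^ 2) * (MvPowerSeries.X i) ^ 2)) * F = 1)
    (μ : Fin n → ℕ)
    (lam : Fin n → ℕ) (hlam : ∀ j : Fin n, lam j = 2 * μ j + (n - 1 - (j : ℕ))) :
    (2 : R) ^ (n - 1) *
        ∑ σ : Equiv.Perm (Fin n),
          ((Equiv.Perm.sign σ : ℤ) : R) *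
            MvPowerSeries.coeff
              (Finsupp.equivFunOnFinite.symm fun i =>
                lam (σ⁻¹ i) + (n - 1 - ((σ⁻¹ i : Fin n) : ℕ))) F
      = (2 : R) ^ (n - 1) *
          (Matrix.of fun i j : Fin n => (t i) ^ (2 * (μ j + (n - 1 - (j : ℕ))))).det := by
  obtain rfl := MvPowerSeries.eq_prodCoeffs_geomCoeff_of_mul_eq_one two_pos _ hF
  rw [Matrix.det_apply']
  congr 1
  refine sum_congr rfl fun σ _ => congrArg _ ?_
  rw [MvPowerSeries.coeff_prodCoeffs, ← Equiv.prod_comp σ]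
  refine prod_congr rfl fun j _ => ?_
  have hexp : lam j + (n - 1 - j) = 2 * (μ j + (n - 1 - j)) := by rw [hlam]; ring
  simp [hexp, geomCoeff_mul two_pos, ← pow_mul]

/-- Iterated-residue evaluation of the push-forward of `s_λ` over the even orthogonal
Grassmannian `OG(n, 2n)` for `λ = 2μ + ρ(n−1)`: the signed sum of coefficients of `F`
(times `2^(n−1)`) equals `2^(n−1) · det((t_i)^(2(μ_j + n − 1 − j)))`. -/
theorem residue_schur_OG_even (R : Type*) [CommRing R] (n : ℕ) (hn : 1 ≤ n)
    (t : Fin n → R) (F : MvPowerSeries (Fin n) R)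
    (hF : (∏ i, (1 - (MvPowerSeries.C : R →+* MvPowerSeries (Fin n) R) ((t i) ^ 2) * (MvPowerSeries.X i) ^ 2)) * F = 1)
    (μ : Fin n → ℕ) (hμ : Antitone μ)
    (lam : Fin n → ℕ) (hlam : ∀ j : Fin n, lam j = 2 * μ j + (n - 1 - (j : ℕ))) :
    (2 : R) ^ (n - 1) *
        ∑ σ : Equiv.Perm (Fin n),
          ((Equiv.Perm.sign σ : ℤ) : R) *
            MvPowerSeries.coeff
              (Finsupp.equivFunOnFinite.symm fun i =>
                lam (σ⁻¹ i) + (n - 1 - ((σ⁻¹ i : Fin n) : ℕ))) F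
      = (2 : R) ^ (n - 1) *
          (Matrix.of fun i j : Fin n => (t i) ^ (2 * (μ j + (n - 1 - (j : ℕ))))).det :=
  residue_schur_OG_even_general R n t F hF μ lam hlam
end

section
/- Let R be a commutative ring, n ≥ 1, t : Fin n → R, and let F be the formal power series in MvPowerSeries (Fin n) R determined by (∏ i, (1 − (t i)^2·(X i)^2)) * F = 1. Let λ : Fin n → ℕ be antitone and suppose there exists j ∈ Fin n with λ j + (n − 1 − j) odd. For a permutation σ of Fin n let e_σ : Fin n →₀ ℕ be given by e_σ i = λ (σ⁻¹ i) + (n − 1 − σ⁻¹ i). Then Σ_{σ ∈ Perm(Fin n)} sign(σ) · (coefficient of the monomial e_σ in F) = 0. (Vanishing of the OG(n,2n) iterated residue when λ is not of the form 2μ + ρ(n−1).) -/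
/-!
Every factor `1 - t_i² X_i²` only involves even powers of the variables, and power series supported
on exponents with all entries even form a subring that is closed under taking inverses. Hence every
coefficient of `F` at an exponent with an odd entry vanishes. Since `e_σ (σ j) = λ j + (n - 1 - j)`
is odd for every `σ`, each term of the alternating sum is zero.
-/

open Finset

namespace MvPowerSeries

variable {σ R : Type*} [CommRing R]

variable (σ R) in
/-- Power series whose coefficients vanish at every exponent with an odd entry. -/
def evenSubring : Subring (MvPowerSeries σ R) where
  carrier := {f | ∀ e : σ →₀ ℕ, (∃ i, Odd (e i)) → coeff e f = 0}
  zero_mem' _ _ := map_zero _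
  one_mem' e := by
    classical
    rintro ⟨i, hi⟩
    rw [coeff_one, if_neg]
    rintro rfl
    exact Nat.not_odd_zero hi
  add_mem' hf hg e he := by rw [map_add, hf e he, hg e he, add_zero]
  neg_mem' hf e he := by rw [map_neg, hf e he, neg_zero]
  mul_mem' {f g} hf hg e := by
    classical
    rintro ⟨i, hi⟩
    rw [coeff_mul]
    refine sum_eq_zero fun p hp => ?_
    rw [HasAntidiagonal.mem_antidiagonal] at hp
    by_cases hp₁ : Odd (p.1 i)
    · rw [hf _ ⟨i, hp₁⟩, zero_mul]
    · rw [hg _ ⟨i, ?_⟩, mul_zero]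
      rw [← hp, Finsupp.add_apply, Nat.odd_add'] at hi
      exact hi.mpr (Nat.not_odd_iff_even.mp hp₁)

lemma C_mul_X_sq_mem_evenSubring (c : R) (i : σ) :
    C c * X i ^ 2 ∈ evenSubring σ R := by
  classical
  rintro e ⟨j, hj⟩
  rw [X_pow_eq, coeff_C_mul, coeff_monomial, if_neg, mul_zero]
  rintro rfl
  by_cases hji : i = j <;> simp [hji, Nat.odd_iff] at hj

open Classical in
noncomputable def evenPart (f : MvPowerSeries σ R) : MvPowerSeries σ R :=
  fun e => if ∃ i, Odd (e i) then 0 else coeff e f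

open Classical in
lemma coeff_evenPart (f : MvPowerSeries σ R) (e : σ →₀ ℕ) :
    coeff e (evenPart f) = if ∃ i, Odd (e i) then 0 else coeff e f :=
  rfl

lemma evenPart_mem_evenSubring (f : MvPowerSeries σ R) : evenPart f ∈ evenSubring σ R :=
  fun e he => by rw [coeff_evenPart, if_pos he]

lemma coeff_sub_evenPart_of_forall_even (f : MvPowerSeries σ R) {e : σ →₀ ℕ}
    (he : ∀ i, Even (e i)) : coeff e (f - evenPart f) = 0 := by
  rw [map_sub, coeff_evenPart,
    if_neg (not_exists.mpr fun i => Nat.not_odd_iff_even.mpr (he i)), sub_self]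

lemma coeff_mul_eq_zero_of_forall_even {a g : MvPowerSeries σ R} (ha : a ∈ evenSubring σ R)
    (hg : ∀ e : σ →₀ ℕ, (∀ i, Even (e i)) → coeff e g = 0) {e : σ →₀ ℕ}
    (he : ∀ i, Even (e i)) : coeff e (a * g) = 0 := by
  classical
  rw [coeff_mul]
  refine sum_eq_zero fun p hp => ?_
  rw [HasAntidiagonal.mem_antidiagonal] at hp
  by_cases hp₁ : ∃ i, Odd (p.1 i)
  · rw [ha _ hp₁, zero_mul]
  · simp only [not_exists, Nat.not_odd_iff_even] at hp₁
    rw [hg _ fun i => ?_, mul_zero]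
    have hei := he i
    rw [← hp, Finsupp.add_apply, Nat.even_add] at hei
    exact hei.mp (hp₁ i)

/-- The odd part `g = f - evenPart f` satisfies `a * g = 1 - a * evenPart f`, so `a * g` is both
even-supported and zero at all-even exponents; hence `a * g = 0` and `g = f * (a * g) = 0`. -/
lemma mem_evenSubring_of_mul_eq_one {a f : MvPowerSeries σ R} (ha : a ∈ evenSubring σ R)
    (haf : a * f = 1) : f ∈ evenSubring σ R := by
  have hag_mem : a * (f - evenPart f) ∈ evenSubring σ R := by
    rw [mul_sub, haf]
    exact sub_mem (one_mem _) (mul_mem ha (evenPart_mem_evenSubring f))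
  have hag : a * (f - evenPart f) = 0 := by
    ext e
    rw [map_zero]
    by_cases he : ∃ i, Odd (e i)
    · exact hag_mem e he
    · simp only [not_exists, Nat.not_odd_iff_even] at he
      exact coeff_mul_eq_zero_of_forall_even ha
        (fun e he => coeff_sub_evenPart_of_forall_even f he) he
  have hodd : f - evenPart f = 0 := by
    rw [← one_mul (f - evenPart f), ← haf, mul_comm a, mul_assoc, hag, mul_zero]
  rw [sub_eq_zero.mp hodd]
  exact evenPart_mem_evenSubring f

end MvPowerSeries

theorem residue_schur_OG_even_vanishing_general (R : Type*) [CommRing R] (n : ℕ)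
    (t : Fin n → R) (F : MvPowerSeries (Fin n) R)
    (hF : (∏ i, (1 - MvPowerSeries.C ((t i) ^ 2) * (MvPowerSeries.X i) ^ 2)) * F = 1)
    (lam : Fin n → ℕ)
    (hpar : ∃ j : Fin n, Odd (lam j + (n - 1 - (j : ℕ)))) :
    ∑ σ : Equiv.Perm (Fin n),
      ((Equiv.Perm.sign σ : ℤ) : R) *
        MvPowerSeries.coeff
          (Finsupp.equivFunOnFinite.symm fun i =>
            lam (σ⁻¹ i) + (n - 1 - ((σ⁻¹ i : Fin n) : ℕ))) F
      = 0 := by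
  have hF_even : F ∈ MvPowerSeries.evenSubring (Fin n) R :=
    MvPowerSeries.mem_evenSubring_of_mul_eq_one
      (Subring.prod_mem _ fun i _ =>
        sub_mem (one_mem _) (MvPowerSeries.C_mul_X_sq_mem_evenSubring _ i)) hF
  obtain ⟨j, hj⟩ := hpar
  refine sum_eq_zero fun σ _ => ?_
  rw [hF_even _ ⟨σ j, by simpa using hj⟩, mul_zero]

/-- Vanishing of the `OG(n, 2n)` iterated residue when `λ` is not of the form
`2μ + ρ(n−1)`, i.e. when some `λ j + (n − 1 − j)` is odd. -/
theorem residue_schur_OG_even_vanishing (R : Type*) [CommRing R] (n : ℕ) (hn : 1 ≤ n)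
    (t : Fin n → R) (F : MvPowerSeries (Fin n) R)
    (hF : (∏ i, (1 - MvPowerSeries.C ((t i) ^ 2) * (MvPowerSeries.X i) ^ 2)) * F = 1)
    (lam : Fin n → ℕ) (hlam : Antitone lam)
    (hpar : ∃ j : Fin n, Odd (lam j + (n - 1 - (j : ℕ)))) :
    ∑ σ : Equiv.Perm (Fin n),
      ((Equiv.Perm.sign σ : ℤ) : R) *
        MvPowerSeries.coeff
          (Finsupp.equivFunOnFinite.symm fun i =>
            lam (σ⁻¹ i) + (n - 1 - ((σ⁻¹ i : Fin n) : ℕ))) F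
      = 0 :=
  residue_schur_OG_even_vanishing_general R n t F hF lam hpar
end

section
/- Let K be a field of characteristic ≠ 2, n ≥ 1, and t : Fin n → K with t i ≠ 0 for all i. Then for every polynomial W ∈ MvPolynomial (Fin n) K, the sum over all sign vectors ε of (evaluation of W at the point i ↦ ε i · t i) / (∏ i, 2·ε i·t i) equals Σ over those exponent vectors k in the support of W for which k i is odd for every i, of (coefficient of the monomial k in W) · ∏ i, (t i)^(k i − 1). (General push-forward formula of Section 4: only the monomials of W = V·∏_{i<j}(z_j − z_i) that are odd in every variable contribute to ∫_{LG(n)} V, each contributing its coefficient times ∏ t_i^{k_i − 1}; the full push-forward is this sum divided by ∏_{i<j}(t_j^2 − t_i^2).) -/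
open Finset

/-!
Both sides are linear in `W`, so it suffices to treat a monomial `z^k`. Its summand factors as
`∏ i, (ε i t i)^(k i) / (2 ε i t i)`, so summing over all sign vectors gives
`∏ i, (t_i^(k_i) - (-t_i)^(k_i)) / (2 t_i)`; the factor for `i` is `t_i^(k_i - 1)` when `k_i` is
odd and `0` when it is even.
-/

section

variable {K : Type*} [Field K]

theorem sum_sign_pow_div_two_mul (hK : (2 : K) ≠ 0) {t : K} (ht : t ≠ 0) (k : ℕ) :
    ∑ b : Bool, ((if b then 1 else -1) * t) ^ k / (2 * (if b then 1 else -1) * t)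
      = if Odd k then t ^ (k - 1) else 0 := by
  rw [Fintype.sum_bool]
  simp only [if_true, Bool.false_eq_true, if_false, one_mul, mul_neg, neg_mul]
  rcases Nat.even_or_odd k with hk | ⟨m, rfl⟩
  · rw [if_neg (Nat.not_odd_iff_even.mpr hk), hk.neg_pow, div_neg, add_neg_cancel]
  · rw [if_pos (odd_two_mul_add_one m), Odd.neg_pow (odd_two_mul_add_one m), neg_div_neg_eq,
      Nat.add_sub_cancel, pow_succ]
    field_simp
    ring

theorem sum_sgnv_monomial_div_prod {n : ℕ} (hK : (2 : K) ≠ 0) {t : Fin n → K}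
    (ht : ∀ i, t i ≠ 0) (k : Fin n → ℕ) :
    ∑ s : Fin n → Bool,
      (∏ i, (sgnv (K := K) s i * t i) ^ k i) / ∏ i, 2 * sgnv (K := K) s i * t i
      = if ∀ i, Odd (k i) then ∏ i, t i ^ (k i - 1) else 0 := by
  simp_rw [← prod_div_distrib]
  refine (Fintype.prod_sum fun i (b : Bool) =>
    ((if b then 1 else -1) * t i) ^ k i / (2 * (if b then 1 else -1) * t i)).symm.trans ?_
  simp_rw [sum_sign_pow_div_two_mul hK (ht _), prod_ite_zero, mem_univ, true_imp_iff]

end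

theorem pushforward_general_general (K : Type*) [Field K] (hK : (2 : K) ≠ 0)
    (n : ℕ)
    (t : Fin n → K) (ht : ∀ i, t i ≠ 0)
    (W : MvPolynomial (Fin n) K) :
    ∑ s : Fin n → Bool,
      MvPolynomial.eval (fun i => sgnv (K := K) s i * t i) W /
        ∏ i, 2 * sgnv (K := K) s i * t i
      = ∑ k ∈ W.support.filter (fun k => ∀ i, Odd (k i)),
          MvPolynomial.coeff k W * ∏ i, (t i) ^ (k i - 1) := by
  simp_rw [MvPolynomial.eval_eq', sum_div, mul_div_assoc]
  rw [sum_comm, sum_filter]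
  refine sum_congr rfl fun k _ => ?_
  rw [← mul_sum, sum_sgnv_monomial_div_prod hK ht, mul_ite, mul_zero]

/-- General push-forward formula of Section 4: only the monomials of `W` that are odd
in every variable contribute, each contributing its coefficient times `∏ i, t_i^(k_i − 1)`. -/
theorem pushforward_general (K : Type*) [Field K] (hK : (2 : K) ≠ 0)
    (n : ℕ) (hn : 1 ≤ n)
    (t : Fin n → K) (ht : ∀ i, t i ≠ 0)
    (W : MvPolynomial (Fin n) K) :
    ∑ s : Fin n → Bool,
      MvPolynomial.eval (fun i => sgnv (K := K) s i * t i) W /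
        ∏ i, 2 * sgnv (K := K) s i * t i
      = ∑ k ∈ W.support.filter (fun k => ∀ i, Odd (k i)),
          MvPolynomial.coeff k W * ∏ i, (t i) ^ (k i - 1) :=
  pushforward_general_general K hK n t ht W
end
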